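/- For a group G, the natural map Ab(G^ℕ) → Ab(G)^ℕ is an isomorphism if and only if the commutator width of G is finite. -/

import Mathlib

open scoped commutatorElement in
/-- The commutator length of `x`: the least `k` such that `x` is a product of `k`
commutators (junk value via `sInf` if `x` is not in the commutator subgroup). -/
noncomputable def commLength {G : Type} [Group G] (x : G) : ℕ :=
  sInf {k : ℕ | ∃ a b : Fin k → G, x = (List.ofFn (fun i => ⁅a i, b i⁆)).prod}

/-- The coordinatewise abelianization map on a countable power. -/
def powAbHom (G : Type) [Group G] : (ℕ → G) →* (ℕ → Abelianization G) :=
  MonoidHom.mk' (fun x n => Abelianization.of (x n)) (by intro a b; funext n; simp)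

/-- The natural map `Ab(G^ℕ) → Ab(G)^ℕ`. -/
def abPowToPowAb (G : Type) [Group G] :
    Abelianization (ℕ → G) →* (ℕ → Abelianization G) :=
  Abelianization.lift (powAbHom G)

/-!
An element of `G^ℕ` is a product of `k` commutators iff each of its coordinates is, with the
same `k`. Since the natural map is always onto, it is an isomorphism iff every sequence in
`[G, G]` lies in `[G^ℕ, G^ℕ]`, i.e. iff the commutator lengths of the terms of any such
sequence are bounded; a sequence whose `n`-th term has commutator length `> n` shows that this
fails when the commutator width is infinite.
-/

open scoped commutatorElement

section ProdOfCommutators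

variable {G : Type*} [Group G]

-- `commLength x` is by definition `sInf {k | IsProdOfCommutators k x}`.
def IsProdOfCommutators (k : ℕ) (x : G) : Prop :=
  ∃ a b : Fin k → G, x = (List.ofFn fun i => ⁅a i, b i⁆).prod

theorem IsProdOfCommutators.mono {k m : ℕ} {x : G} (hkm : k ≤ m)
    (hx : IsProdOfCommutators k x) : IsProdOfCommutators m x := by
  induction m, hkm using Nat.le_induction with
  | base => exact hx
  | succ m _ ih =>
    obtain ⟨a, b, rfl⟩ := ih
    exact ⟨Fin.cons 1 a, Fin.cons 1 b, by simp [List.ofFn_succ]⟩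

theorem IsProdOfCommutators.mem_commutator {k : ℕ} {x : G} (hx : IsProdOfCommutators k x) :
    x ∈ commutator G := by
  obtain ⟨a, b, rfl⟩ := hx
  refine list_prod_mem fun y hy => ?_
  obtain ⟨i, rfl⟩ := List.mem_ofFn.mp hy
  exact Subgroup.commutator_mem_commutator (Subgroup.mem_top _) (Subgroup.mem_top _)

theorem exists_isProdOfCommutators_of_mem_commutator {x : G} (hx : x ∈ commutator G) :
    ∃ k, IsProdOfCommutators k x := by
  -- The inverse of a commutator is a commutator, so `[G, G]` is the submonoid generated by
  -- the commutators.
  have hx_monoid : x ∈ Submonoid.closure (commutatorSet G ∪ (commutatorSet G)⁻¹) := by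
    rw [← Subgroup.closure_toSubmonoid, ← commutator_eq_closure]
    exact hx
  obtain ⟨l, hl, rfl⟩ := Submonoid.exists_list_of_mem_closure hx_monoid
  have hcomm : ∀ i : Fin l.length, ∃ a b : G, ⁅a, b⁆ = l.get i := by
    intro i
    rcases hl _ (List.get_mem l i) with ⟨a, b, hab⟩ | ⟨a, b, hab⟩
    · exact ⟨a, b, hab⟩
    · exact ⟨b, a, by rw [← commutatorElement_inv, hab, inv_inv]⟩
  choose a b hab using hcomm
  exact ⟨l.length, a, b, by simp only [hab, List.ofFn_get]⟩

theorem isProdOfCommutators_pi_iff {ι : Type*} {k : ℕ} {x : ι → G} :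
    IsProdOfCommutators k x ↔ ∀ i, IsProdOfCommutators k (x i) := by
  constructor
  · rintro ⟨a, b, rfl⟩ i
    exact ⟨fun j => a j i, fun j => b j i, by rw [Pi.list_prod_apply, List.map_ofFn]; rfl⟩
  · intro hx
    choose a b hab using hx
    refine ⟨fun j i => a i j, fun j i => b i j, funext fun i => ?_⟩
    rw [hab i, Pi.list_prod_apply, List.map_ofFn]
    rfl

end ProdOfCommutators

section CommLength

variable {G : Type} [Group G]

theorem commLength_le_iff {x : G} (hx : x ∈ commutator G) {B : ℕ} :
    commLength x ≤ B ↔ IsProdOfCommutators B x := by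
  refine ⟨fun hB => ?_, fun hB => Nat.sInf_le hB⟩
  obtain ⟨k, hk⟩ := exists_isProdOfCommutators_of_mem_commutator hx
  exact (Nat.sInf_mem (s := {k | IsProdOfCommutators k x}) ⟨k, hk⟩).mono hB

theorem mem_commutator_pi_of_commLength_le {ι : Type} {B : ℕ}
    (hB : ∀ x ∈ commutator G, commLength x ≤ B) {x : ι → G}
    (hx : ∀ i, x i ∈ commutator G) :
    x ∈ commutator (ι → G) :=
  (isProdOfCommutators_pi_iff.mpr fun i =>
    (commLength_le_iff (hx i)).mp (hB _ (hx i))).mem_commutator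

theorem exists_forall_commLength_apply_le {ι : Type} {x : ι → G}
    (hx : x ∈ commutator (ι → G)) :
    ∃ k, ∀ i, commLength (x i) ≤ k := by
  obtain ⟨k, hk⟩ := exists_isProdOfCommutators_of_mem_commutator hx
  exact ⟨k, fun i => Nat.sInf_le (isProdOfCommutators_pi_iff.mp hk i)⟩

end CommLength

section Abelianization

variable {G : Type*} [Group G]

theorem abelianization_of_eq_one_iff {x : G} : Abelianization.of x = 1 ↔ x ∈ commutator G := by
  rw [← MonoidHom.mem_ker, Abelianization.ker_of]

theorem abelianization_of_surjective :
    Function.Surjective (Abelianization.of : G →* Abelianization G) :=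
  QuotientGroup.mk_surjective

end Abelianization

section AbelianizationOfPower

variable {G : Type} [Group G]

theorem abPowToPowAb_of (x : ℕ → G) :
    abPowToPowAb G (Abelianization.of x) = fun n => Abelianization.of (x n) :=
  rfl

theorem abPowToPowAb_surjective : Function.Surjective (abPowToPowAb G) := by
  intro y
  choose x hx using fun n => abelianization_of_surjective (y n)
  exact ⟨Abelianization.of x, funext hx⟩

theorem abPowToPowAb_injective_iff :
    Function.Injective (abPowToPowAb G) ↔
      ∀ x : ℕ → G, (∀ n, x n ∈ commutator G) → x ∈ commutator (ℕ → G) := by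
  rw [injective_iff_map_eq_one, abelianization_of_surjective.forall]
  simp only [abPowToPowAb_of, funext_iff, Pi.one_apply, abelianization_of_eq_one_iff]

end AbelianizationOfPower

/-- The natural map `Ab(G^ℕ) → Ab(G)^ℕ` is an isomorphism iff `G` has finite
commutator width. -/
theorem stmt_11 (G : Type) [Group G] :
    Function.Bijective (abPowToPowAb G) ↔
      ∃ B : ℕ, ∀ x ∈ commutator G, commLength x ≤ B := by
  rw [Function.Bijective, and_iff_left abPowToPowAb_surjective, abPowToPowAb_injective_iff]
  constructor
  · intro h
    by_contra! hunbounded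
    choose x hx hlong using hunbounded
    obtain ⟨k, hk⟩ := exists_forall_commLength_apply_le (h x hx)
    exact (hk k).not_gt (hlong k)
  · rintro ⟨B, hB⟩ x hx
    exact mem_commutator_pi_of_commLength_le hB hx
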